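/- Let R be a commutative ring. The map ν : R((u))((t))* × R((u))((t))* → ℤ(R) defined by ν(f,g) = ν₂(f)ν₁(g) − ν₁(f)ν₂(g) (the 2×2 determinant of the pairs (ν₂,ν₁)) is bimultiplicative and satisfies the Steinberg relation ν(f, 1−f) = 0 whenever both f and 1−f are units. -/

import Mathlib

/-!
Write `f ∈ R((u))((t))` as `f = Σ aₛ,w tˢ uʷ`. The canonical decomposition shows that every unit
`f` has a leading bidegree `(ν₁ f, ν₂ f)`: all coefficients lexicographically below it are
nilpotent and the coefficient there is a unit. Leading bidegrees add under multiplication (the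
product of the leading coefficients is a unit, every other contribution to that coefficient has
a nilpotent factor) and are unique once `R ≠ 0`, so `ν₁, ν₂` are homomorphisms and `ν` is
bimultiplicative. For the Steinberg relation compare the leading bidegree of `f` with `(0,0)`:
below it, `1 - f` leads where `f` does; above it, `1 - f` leads at `(0,0)`; on it,
`ν(f, ·) = 0`. In each case the determinant `ν(f, 1 - f)` vanishes.
-/

namespace CC

variable {R : Type*} [CommRing R]

/-- The constant embedding `R → R((u))((t))`. -/
noncomputable def CConst (R : Type*) [CommRing R] : R →+* LaurentSeries (LaurentSeries R) :=
  (HahnSeries.C : LaurentSeries R →+* LaurentSeries (LaurentSeries R)).comp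
    (HahnSeries.C : R →+* LaurentSeries R)

/-- `y` lies in `𝔭(R)`: supported in bidegrees `(i,j) < (0,0)` (lexicographically) with all
coefficients nilpotent. -/
def InPP (y : LaurentSeries (LaurentSeries R)) : Prop :=
  (∀ s : ℤ, 0 < s → y.coeff s = 0) ∧
  (∀ w : ℤ, 0 ≤ w → (y.coeff 0).coeff w = 0) ∧
  (∀ s w : ℤ, IsNilpotent ((y.coeff s).coeff w))

/-- `y` lies in `𝔪(R)`: supported in bidegrees `(i,j) > (0,0)` (lexicographically). -/
def InMM (y : LaurentSeries (LaurentSeries R)) : Prop :=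
  (∀ s : ℤ, s < 0 → y.coeff s = 0) ∧ (∀ w : ℤ, w ≤ 0 → (y.coeff 0).coeff w = 0)

open HahnSeries

section LeadsMod

variable {Γ A : Type*} [CommRing A]

def coeffwiseIdeal [AddCommMonoid Γ] [PartialOrder Γ] [IsOrderedCancelAddMonoid Γ]
    (I : Ideal A) : Ideal (HahnSeries Γ A) where
  carrier := {x | ∀ g, x.coeff g ∈ I}
  add_mem' hx hy g := by
    rw [coeff_add]
    exact I.add_mem (hx g) (hy g)
  zero_mem' g := I.zero_mem
  smul_mem' c x hx g := by
    rw [smul_eq_mul, coeff_mul]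
    exact I.sum_mem fun p _ => I.mul_mem_left _ (hx p.2)

section PartialOrder

variable [PartialOrder Γ]

def LeadsMod (I : Ideal A) (U : Set A) (x : HahnSeries Γ A) (g : Γ) : Prop :=
  (∀ h < g, x.coeff h ∈ I) ∧ x.coeff g ∈ U

variable {I : Ideal A} {U : Set A} {x y : HahnSeries Γ A} {g : Γ}

theorem leadsMod_single {a : A} (ha : a ∈ U) : LeadsMod I U (single g a) g :=
  ⟨fun h hh => by rw [coeff_single_of_ne hh.ne]; exact I.zero_mem, by rwa [coeff_single_same]⟩

theorem LeadsMod.neg (hU : ∀ a ∈ U, -a ∈ U) (hx : LeadsMod I U x g) : LeadsMod I U (-x) g :=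
  ⟨fun h hh => by rw [coeff_neg]; exact I.neg_mem (hx.1 h hh),
    by rw [coeff_neg]; exact hU _ hx.2⟩

theorem LeadsMod.add_of_le (hU : ∀ a ∈ U, ∀ b ∈ I, a + b ∈ U) (hx : LeadsMod I U x g)
    (hy : ∀ h ≤ g, y.coeff h ∈ I) : LeadsMod I U (x + y) g :=
  ⟨fun h hh => by rw [coeff_add]; exact I.add_mem (hx.1 h hh) (hy h hh.le),
    by rw [coeff_add]; exact hU _ hx.2 _ (hy g le_rfl)⟩

end PartialOrder

section LinearOrder

variable [LinearOrder Γ] {I : Ideal A}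

theorem LeadsMod.unique {U U' : Set A} {x : HahnSeries Γ A} {g g' : Γ}
    (hU : ∀ a ∈ U, a ∉ I) (hU' : ∀ a ∈ U', a ∉ I)
    (hx : LeadsMod I U x g) (hx' : LeadsMod I U' x g') : g = g' := by
  rcases lt_trichotomy g g' with h | h | h
  · exact absurd (hx'.1 g h) (hU _ hx.2)
  · exact h
  · exact absurd (hx.1 g' h) (hU' _ hx'.2)

variable [AddCommMonoid Γ] [IsOrderedCancelAddMonoid Γ]

theorem lt_or_lt_of_add_le_add_of_ne {a b c d : Γ} (h : a + b ≤ c + d)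
    (hne : (a, b) ≠ (c, d)) : a < c ∨ b < d := by
  by_contra! hge
  obtain ⟨rfl, rfl⟩ :=
    (add_eq_add_iff_eq_and_eq hge.1 hge.2).mp (le_antisymm (add_le_add hge.1 hge.2) h)
  exact hne rfl

theorem LeadsMod.mul {U₁ U₂ U₃ : Set A} (hmul : ∀ a ∈ U₁, ∀ b ∈ U₂, a * b ∈ U₃)
    (hU₃ : ∀ a ∈ U₃, ∀ b ∈ I, a + b ∈ U₃) {x y : HahnSeries Γ A} {g g' : Γ}
    (hx : LeadsMod I U₁ x g) (hy : LeadsMod I U₂ y g') :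
    LeadsMod I U₃ (x * y) (g + g') := by
  have hsmall : ∀ a b, a + b ≤ g + g' → (a, b) ≠ (g, g') → x.coeff a * y.coeff b ∈ I := by
    intro a b hab hne
    rcases lt_or_lt_of_add_le_add_of_ne hab hne with ha | hb
    · exact I.mul_mem_right _ (hx.1 a ha)
    · exact I.mul_mem_left _ (hy.1 b hb)
  refine ⟨fun h hh => ?_, ?_⟩
  · rw [coeff_mul]
    refine I.sum_mem fun p hp => ?_
    obtain ⟨-, -, rfl⟩ := Finset.mem_antidiagonal.mp hp
    refine hsmall _ _ hh.le fun he => hh.ne ?_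
    rw [Prod.mk.inj he |>.1, Prod.mk.inj he |>.2]
  · classical
    let S := Finset.antidiagonal x.isPWO_support y.isPWO_support (g + g')
    have hsplit : (x * y).coeff (g + g') =
        x.coeff g * y.coeff g' + ∑ p ∈ S.erase (g, g'), x.coeff p.1 * y.coeff p.2 := by
      rw [coeff_mul]
      by_cases hmem : (g, g') ∈ S
      · exact (Finset.add_sum_erase _ _ hmem).symm
      · have hzero : x.coeff g * y.coeff g' = 0 := by
          contrapose! hmem
          exact Finset.mem_antidiagonal.mpr
            ⟨left_ne_zero_of_mul hmem, right_ne_zero_of_mul hmem, rfl⟩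
        rw [Finset.erase_eq_of_notMem hmem, hzero, zero_add]
    rw [hsplit]
    refine hU₃ _ (hmul _ hx.2 _ hy.2) _ (I.sum_mem fun p hp => ?_)
    obtain ⟨hne, hp⟩ := Finset.mem_erase.mp hp
    exact hsmall _ _ (Finset.mem_antidiagonal.mp hp).2.2.le hne

end LinearOrder

end LeadsMod

section LeadsAt

/-- `f` has leading bidegree `(j, i)`: coefficients lexicographically below `(j, i)` are
nilpotent and the one at `(j, i)` is a unit. -/
def LeadsAt (f : LaurentSeries (LaurentSeries R)) (j i : ℤ) : Prop :=
  LeadsMod (coeffwiseIdeal (nilradical R)) {y | LeadsMod (nilradical R) {a | IsUnit a} y i} f j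

theorem isUnit_add_of_mem_nilradical {a b : R} (ha : IsUnit a) (hb : b ∈ nilradical R) :
    IsUnit (a + b) :=
  (mem_nilradical.mp hb).isUnit_add_left_of_commute ha (Commute.all _ _)

variable {f g : LaurentSeries (LaurentSeries R)} {j i j' i' : ℤ}

theorem LeadsAt.isNilpotent_coeff (hf : LeadsAt f j i) {s w : ℤ}
    (hsw : toLex (s, w) < toLex (j, i)) : IsNilpotent ((f.coeff s).coeff w) := by
  rcases Prod.Lex.toLex_lt_toLex.mp hsw with hs | ⟨rfl, hw⟩
  · exact mem_nilradical.mp (hf.1 s hs w)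
  · exact mem_nilradical.mp (hf.2.1 w hw)

theorem LeadsAt.mul (hf : LeadsAt f j i) (hg : LeadsAt g j' i') :
    LeadsAt (f * g) (j + j') (i + i') := by
  refine LeadsMod.mul (fun y hy z hz => ?_) (fun y hy z hz => ?_) hf hg
  · exact LeadsMod.mul (U₃ := {a | IsUnit a}) (fun _ ha _ hb => ha.mul hb)
      (fun _ ha _ hb => isUnit_add_of_mem_nilradical ha hb) hy hz
  · exact LeadsMod.add_of_le (fun _ ha _ hb => isUnit_add_of_mem_nilradical ha hb) hy
      fun w _ => hz w

theorem LeadsAt.neg (hf : LeadsAt f j i) : LeadsAt (-f) j i :=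
  LeadsMod.neg (fun _ ha => LeadsMod.neg (U := {a | IsUnit a}) (fun _ ha => ha.neg) ha) hf

theorem LeadsAt.add_of_isNilpotent (hf : LeadsAt f j i)
    (hg : ∀ s w, toLex (s, w) ≤ toLex (j, i) → IsNilpotent ((g.coeff s).coeff w)) :
    LeadsAt (f + g) j i := by
  refine ⟨fun s hs w => ?_, ?_⟩
  · rw [coeff_add]
    exact Ideal.add_mem _ (hf.1 s hs w)
      (mem_nilradical.mpr (hg s w (Prod.Lex.toLex_le_toLex.mpr (.inl hs))))
  · rw [coeff_add]
    exact hf.2.add_of_le (fun _ ha _ hb => isUnit_add_of_mem_nilradical ha hb) fun w hw =>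
      mem_nilradical.mpr (hg j w (Prod.Lex.toLex_le_toLex.mpr (.inr ⟨rfl, hw⟩)))

theorem LeadsAt.unique [Nontrivial R] (hf : LeadsAt f j i) (hf' : LeadsAt f j' i') :
    j = j' ∧ i = i' := by
  have hunit : ∀ a ∈ {a : R | IsUnit a}, a ∉ nilradical R :=
    fun _ ha hnil => (mem_nilradical.mp hnil).not_isUnit ha
  have hlead (i : ℤ) : ∀ y ∈ {y | LeadsMod (nilradical R) {a | IsUnit a} y i},
      y ∉ coeffwiseIdeal (nilradical R) :=
    fun _ hy hnil => hunit _ hy.2 (hnil i)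
  obtain rfl := LeadsMod.unique (hlead i) (hlead i') hf hf'
  exact ⟨rfl, LeadsMod.unique hunit hunit hf.2 hf'.2⟩

theorem leadsAt_single (a : Rˣ) (j i : ℤ) : LeadsAt (single j (single i (a : R))) j i :=
  leadsMod_single (leadsMod_single a.isUnit)

theorem leadsAt_one : LeadsAt (1 : LaurentSeries (LaurentSeries R)) 0 0 := by
  simpa only [Units.val_one, single_zero_one] using leadsAt_single (1 : Rˣ) 0 0

theorem leadsAt_of_inPP (hf : InPP (f - 1)) :
    LeadsAt f 0 0 := by
  simpa only [add_sub_cancel] using leadsAt_one.add_of_isNilpotent fun s w _ => hf.2.2 s w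

theorem leadsAt_of_inMM (hf : InMM (f - 1)) :
    LeadsAt f 0 0 := by
  have hsmall (s w : ℤ) (hsw : toLex (s, w) ≤ toLex (0, 0)) :
      IsNilpotent (((f - 1).coeff s).coeff w) := by
    rcases Prod.Lex.toLex_le_toLex.mp hsw with hs | ⟨rfl, hw⟩
    · rw [hf.1 s hs, coeff_zero]
      exact IsNilpotent.zero
    · rw [hf.2 w hw]
      exact IsNilpotent.zero
  simpa only [add_sub_cancel] using leadsAt_one.add_of_isNilpotent hsmall

theorem CConst_mul_single_single (a : R) (j i : ℤ) :
    CConst R a * single j (single i 1) = single j (single i a) := by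
  rw [CConst, RingHom.comp_apply, C_apply, C_apply, single_mul_single, single_mul_single,
    zero_add, zero_add, mul_one]

theorem leadsAt_of_eq_mul {fm fp : LaurentSeries (LaurentSeries R)} {a : Rˣ}
    (hm : InPP (fm - 1)) (hp : InMM (fp - 1))
    (hf : f = fm * CConst R a * single j (single i 1) * fp) : LeadsAt f j i := by
  rw [hf, mul_assoc fm, CConst_mul_single_single]
  simpa only [zero_add, add_zero] using
    ((leadsAt_of_inPP hm).mul (leadsAt_single a j i)).mul (leadsAt_of_inMM hp)

theorem LeadsAt.one_sub_cases [Nontrivial R] (hf : LeadsAt f j i)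
    (hg : LeadsAt (1 - f) j' i') : (j', i') = (j, i) ∨ (j', i') = (0, 0) ∨ (j, i) = (0, 0) := by
  rcases lt_trichotomy (toLex (j, i)) (toLex (0, 0)) with hlt | heq | hgt
  · have h : LeadsAt (1 - f) j i := by
      rw [sub_eq_neg_add]
      exact hf.neg.add_of_isNilpotent fun s w hsw =>
        leadsAt_one.isNilpotent_coeff (hsw.trans_lt hlt)
    obtain ⟨rfl, rfl⟩ := hg.unique h
    exact .inl rfl
  · exact .inr (.inr (toLex.injective heq))
  · have h : LeadsAt (1 - f) 0 0 := by
      rw [sub_eq_add_neg]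
      refine leadsAt_one.add_of_isNilpotent fun s w hsw => ?_
      rw [coeff_neg, coeff_neg]
      exact (hf.isNilpotent_coeff (hsw.trans_lt hgt)).neg
    obtain ⟨rfl, rfl⟩ := hg.unique h
    exact .inr (.inl rfl)

end LeadsAt

theorem nu_bimultiplicative_steinberg
    (ν₁ ν₂ : (LaurentSeries (LaurentSeries R))ˣ → ℤ)
    (hdec : ∀ f : (LaurentSeries (LaurentSeries R))ˣ,
      ∃ (fm fp : LaurentSeries (LaurentSeries R)) (f0 : Rˣ),
        InPP (fm - 1) ∧ InMM (fp - 1) ∧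
        (f : LaurentSeries (LaurentSeries R)) =
          fm * CConst R (f0 : R) *
            HahnSeries.single (ν₁ f) (HahnSeries.single (ν₂ f) (1 : R)) * fp) :
    (∀ f f' g : (LaurentSeries (LaurentSeries R))ˣ,
        ν₂ (f * f') * ν₁ g - ν₁ (f * f') * ν₂ g =
          (ν₂ f * ν₁ g - ν₁ f * ν₂ g) + (ν₂ f' * ν₁ g - ν₁ f' * ν₂ g)) ∧
    (∀ f g g' : (LaurentSeries (LaurentSeries R))ˣ,
        ν₂ f * ν₁ (g * g') - ν₁ f * ν₂ (g * g') =
          (ν₂ f * ν₁ g - ν₁ f * ν₂ g) + (ν₂ f * ν₁ g' - ν₁ f * ν₂ g')) ∧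
    (∀ f g : (LaurentSeries (LaurentSeries R))ˣ,
        (f : LaurentSeries (LaurentSeries R)) + (g : LaurentSeries (LaurentSeries R)) = 1 →
        ν₂ f * ν₁ g - ν₁ f * ν₂ g = 0) := by
  rcases subsingleton_or_nontrivial R with hR | hR
  · have hunits (f : (LaurentSeries (LaurentSeries R))ˣ) : f = 1 := Subsingleton.elim f 1
    refine ⟨fun f f' g => ?_, fun f g g' => ?_, fun f g _ => ?_⟩ <;> simp only [hunits] <;> ring
  have hlead (f : (LaurentSeries (LaurentSeries R))ˣ) :
      LeadsAt (f : LaurentSeries (LaurentSeries R)) (ν₁ f) (ν₂ f) := by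
    obtain ⟨fm, fp, f0, hm, hp, hf⟩ := hdec f
    exact leadsAt_of_eq_mul hm hp hf
  have hmul (f g : (LaurentSeries (LaurentSeries R))ˣ) :
      ν₁ (f * g) = ν₁ f + ν₁ g ∧ ν₂ (f * g) = ν₂ f + ν₂ g :=
    (hlead (f * g)).unique (Units.val_mul f g ▸ (hlead f).mul (hlead g))
  refine ⟨fun f f' g => ?_, fun f g g' => ?_, fun f g hfg => ?_⟩
  · rw [(hmul f f').1, (hmul f f').2]
    ring
  · rw [(hmul g g').1, (hmul g g').2]
    ring
  · have hg : LeadsAt (1 - f : LaurentSeries (LaurentSeries R)) (ν₁ g) (ν₂ g) :=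
      eq_sub_of_add_eq' hfg ▸ hlead g
    rcases (hlead f).one_sub_cases hg with h | h | h <;>
      obtain ⟨h₁, h₂⟩ := Prod.mk.inj h <;> rw [h₁, h₂] <;> ring

end CC
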